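/- Let Y_1,...,Y_n be i.i.d. from the standard normal distribution right-truncated at η, and let Y_(n) be their maximum. With a_n = η - Φ_η^{-1}(1 - 1/n) and b_n = η, the normalized maximum (Y_(n) - η)/a_n converges in distribution to the reverse Weibull distribution with shape 1: lim_{n→∞} P((Y_(n) - η)/a_n ≤ x) = exp(x) for x ≤ 0 (i.e., exp(-(-x)) for x ≤ 0, and 1 for x > 0). -/

import Mathlib

open MeasureTheory ProbabilityTheory Filter Real

noncomputable def Phi (x : ℝ) : ℝ := ((gaussianReal 0 1) (Set.Iic x)).toReal

noncomputable def stdphi (x : ℝ) : ℝ := gaussianPDFReal 0 1 x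

noncomputable def PhiInv (p : ℝ) : ℝ := Function.invFun Phi p

noncomputable def truncNormal (η : ℝ) : Measure ℝ :=
  volume.withDensity (fun x => ENNReal.ofReal (if x < η then stdphi x / Phi η else 0))

/-- Quantile function of the truncated normal: Φ_η⁻¹(p) = Φ⁻¹(p Φ(η)). -/
noncomputable def truncQuantile (η p : ℝ) : ℝ := PhiInv (p * Phi η)

/-!
Independence turns the probability into `(Φ(η + a_n x) / Φ(η))^n = (1 + t_n / n)^n` with
`t_n = n (Φ(η + a_n x) - Φ(η)) / Φ(η)`. The quantile identity `Φ(η) - Φ(η - a_n) = Φ(η) / n`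
rewrites `t_n` as `(Φ(η + a_n x) - Φ(η)) / (Φ(η) - Φ(η - a_n))`, which tends to `x` because
`a_n → 0⁺` and `Φ'(η) = φ(η) ≠ 0`; hence the probability tends to `exp x`.
-/

open Topology

lemma measure_forall_le_eq_pow {Ω ι : Type*} [MeasurableSpace Ω] {P : Measure Ω}
    {ν : Measure ℝ} {Y : ι → Ω → ℝ} (hmeas : ∀ i, Measurable (Y i))
    (hindep : iIndepFun Y P) (hlaw : ∀ i, P.map (Y i) = ν) (s : Finset ι) (t : ℝ) :
    P {ω | ∀ i ∈ s, Y i ω ≤ t} = ν (Set.Iic t) ^ s.card := by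
  have hset : {ω | ∀ i ∈ s, Y i ω ≤ t} = ⋂ i ∈ s, Y i ⁻¹' Set.Iic t := by
    ext ω
    simp
  rw [hset, hindep.meas_biInter fun i _ => ⟨Set.Iic t, measurableSet_Iic, rfl⟩,
    Finset.prod_congr rfl fun i _ => (Measure.map_apply (hmeas i) measurableSet_Iic).symm,
    Finset.prod_congr rfl fun i _ => congrArg (· (Set.Iic t)) (hlaw i), Finset.prod_const]

lemma HasDerivAt.tendsto_sub_div {f : ℝ → ℝ} {a d : ℝ} (hf : HasDerivAt f d a) (x : ℝ) :
    Tendsto (fun r => (f (a + r * x) - f a) / r) (𝓝[≠] 0) (𝓝 (d * x)) := by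
  have hline : HasDerivAt (fun r : ℝ => a + r * x) x 0 := by
    simpa using ((hasDerivAt_id (0 : ℝ)).mul_const x).const_add a
  refine (hasDerivAt_iff_tendsto_slope.1 (hf.comp_of_eq 0 hline (by simp))).congr fun r => ?_
  simp [slope_def_field]

lemma HasDerivAt.tendsto_sub_div_sub {f : ℝ → ℝ} {a d : ℝ} (hf : HasDerivAt f d a)
    (hd : d ≠ 0) (x : ℝ) :
    Tendsto (fun r => (f (a + r * x) - f a) / (f a - f (a - r))) (𝓝[≠] 0)
      (𝓝 x) := by
  have hlim := (hf.tendsto_sub_div x).div (hf.tendsto_sub_div (-1)).neg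
    (by simpa using hd)
  rw [show d * x / -(d * -1) = x by field_simp] at hlim
  refine hlim.congr' ?_
  filter_upwards [self_mem_nhdsWithin] with r (hr : r ≠ 0)
  simp only [Pi.div_apply, mul_neg_one, ← sub_eq_add_neg, ← neg_div, neg_sub]
  exact div_div_div_cancel_right₀ hr _ _

lemma Phi_eq_cdf : Phi = cdf (gaussianReal 0 1) := by
  funext t
  rw [cdf_eq_real]
  rfl

lemma Phi_eq_integral (t : ℝ) : Phi t = ∫ x in Set.Iic t, stdphi x := by
  rw [Phi, gaussianReal_apply_eq_integral 0 one_ne_zero, ENNReal.toReal_ofReal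
    (setIntegral_nonneg measurableSet_Iic fun x _ => gaussianPDFReal_nonneg 0 1 x)]
  rfl

lemma continuous_stdphi : Continuous stdphi := by
  unfold stdphi gaussianPDFReal
  fun_prop

lemma integrable_stdphi : Integrable stdphi := integrable_gaussianPDFReal 0 1

lemma stdphi_pos (x : ℝ) : 0 < stdphi x := gaussianPDFReal_pos 0 1 x one_ne_zero

lemma hasDerivAt_Phi (t : ℝ) : HasDerivAt Phi (stdphi t) t := by
  have hPhi : Phi = fun u => Phi 0 + ∫ x in (0 : ℝ)..u, stdphi x := by
    funext u
    rw [Phi_eq_integral, Phi_eq_integral, ← intervalIntegral.integral_Iic_sub_Iic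
      integrable_stdphi.integrableOn integrable_stdphi.integrableOn]
    ring
  rw [hPhi]
  exact (intervalIntegral.integral_hasDerivAt_right integrable_stdphi.intervalIntegrable
    (continuous_stdphi.stronglyMeasurableAtFilter _ _) continuous_stdphi.continuousAt).const_add _

lemma continuous_Phi : Continuous Phi :=
  continuous_iff_continuousAt.2 fun t => (hasDerivAt_Phi t).continuousAt

lemma strictMono_Phi : StrictMono Phi :=
  strictMono_of_deriv_pos fun t => (hasDerivAt_Phi t).deriv ▸ stdphi_pos t

lemma Phi_pos (t : ℝ) : 0 < Phi t :=
  (Phi_eq_cdf ▸ cdf_nonneg _ (t - 1) : 0 ≤ Phi (t - 1)).trans_lt (strictMono_Phi (by linarith))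

lemma Phi_lt_one (t : ℝ) : Phi t < 1 :=
  (strictMono_Phi (lt_add_one t)).trans_le (Phi_eq_cdf ▸ cdf_le_one _ _)

lemma isEmbedding_Phi : Topology.IsEmbedding Phi :=
  strictMono_Phi.isEmbedding_of_ordConnected (isPreconnected_range continuous_Phi).ordConnected

lemma Phi_PhiInv {p : ℝ} (hp0 : 0 < p) (hp1 : p < 1) : Phi (PhiInv p) = p := by
  refine Function.invFun_eq (mem_range_of_exists_le_of_exists_ge continuous_Phi ?_ ?_)
  · exact ((Phi_eq_cdf ▸ tendsto_cdf_atBot _).eventually (eventually_le_nhds hp0)).exists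
  · exact ((Phi_eq_cdf ▸ tendsto_cdf_atTop _).eventually (eventually_ge_nhds hp1)).exists

lemma Phi_truncQuantile (η : ℝ) {p : ℝ} (hp0 : 0 < p) (hp1 : p ≤ 1) :
    Phi (truncQuantile η p) = p * Phi η :=
  Phi_PhiInv (mul_pos hp0 (Phi_pos η))
    ((mul_le_of_le_one_left (Phi_pos η).le hp1).trans_lt (Phi_lt_one η))

lemma Phi_sub_Phi_truncQuantile (η : ℝ) {n : ℕ} (hn : 2 ≤ n) :
    Phi η - Phi (truncQuantile η (1 - 1 / n)) = Phi η / n := by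
  have hp0 : 0 < 1 - 1 / (n : ℝ) := by
    rw [sub_pos, div_lt_one (by positivity)]
    exact_mod_cast hn
  rw [Phi_truncQuantile η hp0 (sub_le_self _ (by positivity))]
  ring

lemma tendsto_sub_truncQuantile (η : ℝ) :
    Tendsto (fun n : ℕ => η - truncQuantile η (1 - 1 / n)) atTop (𝓝[>] 0) := by
  have hgap := (eventually_ge_atTop 2).mono fun n hn => Phi_sub_Phi_truncQuantile η hn
  refine tendsto_nhdsWithin_iff.2 ⟨?_, ?_⟩
  · have hq : Tendsto (fun n : ℕ => truncQuantile η (1 - 1 / n)) atTop (𝓝 η) := by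
      rw [isEmbedding_Phi.tendsto_nhds_iff]
      have := (tendsto_const_div_atTop_nhds_zero_nat (Phi η)).const_sub (Phi η)
      rw [sub_zero] at this
      exact this.congr' (hgap.mono fun n h => by simp [← h])
    simpa using hq.const_sub η
  · filter_upwards [hgap, eventually_gt_atTop 0] with n hΦ hn
    have : Phi (truncQuantile η (1 - 1 / n)) < Phi η := by
      rw [← sub_pos, hΦ]
      exact div_pos (Phi_pos η) (Nat.cast_pos.2 hn)
    exact sub_pos.2 (strictMono_Phi.lt_iff_lt.1 this)

lemma truncNormal_Iic {η t : ℝ} (ht : t ≤ η) :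
    truncNormal η (Set.Iic t) = ENNReal.ofReal (Phi t / Phi η) := by
  have hdensity : (fun x => ENNReal.ofReal (if x < η then stdphi x / Phi η else 0))
      =ᵐ[volume.restrict (Set.Iic t)] fun x => ENNReal.ofReal (stdphi x / Phi η) := by
    filter_upwards [ae_restrict_mem measurableSet_Iic,
      ae_restrict_of_ae (compl_mem_ae_iff.2 (measure_singleton η))] with x hxt hxη
    rw [if_pos (lt_of_le_of_ne (hxt.trans ht) hxη)]
  rw [truncNormal, withDensity_apply _ measurableSet_Iic, lintegral_congr_ae hdensity,
    ← ofReal_integral_eq_lintegral_ofReal (integrable_stdphi.div_const _).restrict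
      (ae_of_all _ fun x => div_nonneg (stdphi_pos x).le (Phi_pos η).le),
    integral_div, ← Phi_eq_integral]

lemma measure_forall_sub_div_le_eq_Phi_div_pow {Ω : Type*} [MeasurableSpace Ω] {P : Measure Ω}
    {η : ℝ} {Y : ℕ → Ω → ℝ} (hmeas : ∀ i, Measurable (Y i)) (hindep : iIndepFun Y P)
    (hlaw : ∀ i, P.map (Y i) = truncNormal η) {a x : ℝ} (ha : 0 < a) (hx : x ≤ 0) (n : ℕ) :
    (P {ω | ∀ i < n, (Y i ω - η) / a ≤ x}).toReal = (Phi (η + a * x) / Phi η) ^ n := by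
  have hset : {ω | ∀ i < n, (Y i ω - η) / a ≤ x}
      = {ω | ∀ i ∈ Finset.range n, Y i ω ≤ η + a * x} := by
    ext ω
    simp only [Set.mem_ofPred_eq, Finset.mem_range, div_le_iff₀ ha]
    refine forall₂_congr fun i _ => ?_
    constructor <;> intro h <;> linarith
  rw [hset, measure_forall_le_eq_pow hmeas hindep hlaw, truncNormal_Iic (by nlinarith),
    Finset.card_range, ENNReal.toReal_pow,
    ENNReal.toReal_ofReal (div_nonneg (Phi_pos _).le (Phi_pos η).le)]

theorem stmt7_general {Ω : Type*} [MeasureSpace Ω]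
    (η : ℝ) (Y : ℕ → Ω → ℝ) (hmeas : ∀ i, Measurable (Y i))
    (hindep : iIndepFun Y ℙ)
    (hlaw : ∀ i, Measure.map (Y i) ℙ = truncNormal η)
    (x : ℝ) (hx : x ≤ 0) :
    Filter.Tendsto (fun n : ℕ =>
      (ℙ {ω | ∀ i < n, (Y i ω - η) / (η - truncQuantile η (1 - 1 / n)) ≤ x}).toReal)
      Filter.atTop (nhds (Real.exp x)) := by
  have hgap := (eventually_ge_atTop 2).mono fun n hn => Phi_sub_Phi_truncQuantile η hn
  have ha_lim := tendsto_sub_truncQuantile η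
  obtain ⟨q, hq⟩ : ∃ q : ℕ → ℝ, ∀ n : ℕ, truncQuantile η (1 - 1 / n) = q n :=
    ⟨_, fun _ => rfl⟩
  simp only [hq] at hgap ha_lim ⊢
  have hlim : Tendsto (fun n : ℕ => n * ((Phi (η + (η - q n) * x) - Phi η) / Phi η)) atTop
      (𝓝 x) := by
    refine (((hasDerivAt_Phi η).tendsto_sub_div_sub (stdphi_pos η).ne' x).comp
      (ha_lim.mono_right (nhdsWithin_mono _ fun r hr => ne_of_gt hr))).congr' ?_
    filter_upwards [hgap, eventually_gt_atTop 0] with n hΦ hn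
    rw [Function.comp_apply, sub_sub_cancel, hΦ]
    field_simp
  refine (Real.tendsto_one_add_pow_exp_of_tendsto hlim).congr' ?_
  filter_upwards [ha_lim self_mem_nhdsWithin] with n hn
  rw [measure_forall_sub_div_le_eq_Phi_div_pow hmeas hindep hlaw hn hx, sub_div,
    div_self (Phi_pos η).ne', add_sub_cancel]

/-- With a_n = η - Φ_η^{-1}(1-1/n), the normalized maximum (Y_(n) - η)/a_n of n
i.i.d. truncated normals converges in distribution to the reverse Weibull with
shape 1: P((Y_(n) - η)/a_n ≤ x) → exp(x) for x ≤ 0. -/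
theorem stmt7 {Ω : Type*} [MeasureSpace Ω] [IsProbabilityMeasure (ℙ : Measure Ω)]
    (η : ℝ) (Y : ℕ → Ω → ℝ) (hmeas : ∀ i, Measurable (Y i))
    (hindep : iIndepFun Y ℙ)
    (hlaw : ∀ i, Measure.map (Y i) ℙ = truncNormal η)
    (x : ℝ) (hx : x ≤ 0) :
    Filter.Tendsto (fun n : ℕ =>
      (ℙ {ω | ∀ i < n, (Y i ω - η) / (η - truncQuantile η (1 - 1 / n)) ≤ x}).toReal)
      Filter.atTop (nhds (Real.exp x)) :=
  stmt7_general η Y hmeas hindep hlaw x hx
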